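/- Let S = [0,3) and define the Markov transition kernel P on S by: P(x, {x+1}) = 1 and P(x+1, {x+2}) = 1 for x ∈ [0,1), and P(x+2, B) = Leb(B)/2 for x ∈ [0,1) and Borel B ⊆ [0,1) ∪ [2,3). Let π be the probability measure on S with density p(x) = (1/4)·1_{[0,2)}(x) + (1/2)·1_{[2,3)}(x) with respect to Lebesgue measure. Then for every f ∈ L¹(π), ‖P³f‖_∞ ≤ 3·‖f‖_{L¹(π)}; i.e. the 3-step transition operator P³ is ultrabounded. -/

import Mathlib

/-!
From `[0,2)` the chain moves deterministically one unit to the right, and from `[2,3)` it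
regenerates uniformly on `[0,1) ∪ [2,3)`. Hence `P³f` is constant on each of `[0,1)`, `[1,2)`,
`[2,3)`, with values the regeneration means of `f`, `Pf`, `P²f`. Unwinding the recursion
`mean (Pu) = (∫_{[1,2)} u + mean u) / 2`, each of these is a combination of the Lebesgue
integrals of `f` over the three unit intervals which is dominated by
`2 ∫ |f| dπ = (∫_{[0,2)} |f| + 2 ∫_{[2,3)} |f|) / 2`.
-/

open MeasureTheory Set
open scoped ENNReal

noncomputable section

/-- The transition operator of the Markov chain on `S = [0,3)` given by
`P(x,{x+1}) = 1` for `x ∈ [0,1)`, `P(x+1,{x+2}) = 1` for `x ∈ [0,1)` and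
`P(x+2,B) = Leb(B)/2` for `x ∈ [0,1)`, `B ⊆ [0,1) ∪ [2,3)`:
`(Pf)(x) = ∫ f(y) P(x,dy)`. -/
def PopSkel (f : ℝ → ℝ) (x : ℝ) : ℝ :=
  if x ∈ Set.Ico (0 : ℝ) 2 then f (x + 1)
  else if x ∈ Set.Ico (2 : ℝ) 3 then
    (1 / 2) * ∫ y in Set.Ico (0 : ℝ) 1 ∪ Set.Ico (2 : ℝ) 3, f y
  else 0

/-- The stationary distribution of the chain: the measure on `[0,3)` with density
`(1/4)·1_{[0,2)} + (1/2)·1_{[2,3)}` with respect to Lebesgue measure. -/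
def piSkel : Measure ℝ :=
  volume.withDensity fun x =>
    ENNReal.ofReal (if x ∈ Set.Ico (0 : ℝ) 2 then 1 / 4
      else if x ∈ Set.Ico (2 : ℝ) 3 then 1 / 2 else 0)

def regenMean (u : ℝ → ℝ) : ℝ :=
  (1 / 2) * ∫ y in Ico (0 : ℝ) 1 ∪ Ico (2 : ℝ) 3, u y

theorem setIntegral_Ico_comp_add_right (u : ℝ → ℝ) (a b c : ℝ) :
    ∫ y in Ico a b, u (y + c) = ∫ y in Ico (a + c) (b + c), u y := by
  have h := (measurePreserving_add_right volume c).setIntegral_preimage_emb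
    (measurableEmbedding_addRight c) u (Ico (a + c) (b + c))
  simpa only [preimage_add_const_Ico, add_sub_cancel_right] using h

theorem MeasureTheory.IntegrableOn.comp_add_right_Ico {u : ℝ → ℝ} {a b c : ℝ}
    (hu : IntegrableOn u (Ico (a + c) (b + c))) : IntegrableOn (fun y => u (y + c)) (Ico a b) := by
  have h := ((measurePreserving_add_right volume c).integrableOn_comp_preimage
    (measurableEmbedding_addRight c) (f := u) (s := Ico (a + c) (b + c))).2 hu
  rwa [preimage_add_const_Ico, add_sub_cancel_right, add_sub_cancel_right] at h

theorem setIntegral_Ico_union_Ico {u : ℝ → ℝ} {a b c : ℝ} (hab : a ≤ b) (hbc : b ≤ c)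
    (hu : IntegrableOn u (Ico a c)) :
    ∫ y in Ico a c, u y = (∫ y in Ico a b, u y) + ∫ y in Ico b c, u y := by
  rw [← Ico_union_Ico_eq_Ico hab hbc] at hu ⊢
  exact setIntegral_union Ico_disjoint_Ico_same measurableSet_Ico
    (integrableOn_union.1 hu).1 (integrableOn_union.1 hu).2

section Operator

variable {u : ℝ → ℝ} {x : ℝ}

theorem popSkel_of_mem_Ico_zero_two (hx : x ∈ Ico (0 : ℝ) 2) : PopSkel u x = u (x + 1) :=
  if_pos hx

theorem popSkel_of_mem_Ico_two_three (hx : x ∈ Ico (2 : ℝ) 3) : PopSkel u x = regenMean u := by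
  have hx' : x ∉ Ico (0 : ℝ) 2 := fun h => (not_lt.2 hx.1) h.2
  rw [PopSkel, if_neg hx', if_pos hx, regenMean]

theorem popSkel_of_notMem_Ico (hx : x ∉ Ico (0 : ℝ) 3) : PopSkel u x = 0 := by
  have h02 : x ∉ Ico (0 : ℝ) 2 := fun h => hx ⟨h.1, by linarith [h.2]⟩
  have h23 : x ∉ Ico (2 : ℝ) 3 := fun h => hx ⟨by linarith [h.1], h.2⟩
  rw [PopSkel, if_neg h02, if_neg h23]

theorem setIntegral_popSkel_Ico {a b : ℝ} (ha : 0 ≤ a) (hb : b ≤ 2) :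
    ∫ y in Ico a b, PopSkel u y = ∫ y in Ico (a + 1) (b + 1), u y := by
  rw [← setIntegral_Ico_comp_add_right]
  exact setIntegral_congr_fun measurableSet_Ico fun y hy =>
    popSkel_of_mem_Ico_zero_two ⟨ha.trans hy.1, hy.2.trans_le hb⟩

theorem integrableOn_popSkel (hu : IntegrableOn u (Ico 0 3)) :
    IntegrableOn (PopSkel u) (Ico 0 3) := by
  rw [← Ico_union_Ico_eq_Ico (by norm_num : (0 : ℝ) ≤ 2) (by norm_num), integrableOn_union]
  constructor
  · have hu' : IntegrableOn u (Ico (0 + 1) (2 + 1)) :=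
      hu.mono_set (Ico_subset_Ico (by norm_num) (by norm_num))
    exact IntegrableOn.congr_fun hu'.comp_add_right_Ico
      (fun y hy => (popSkel_of_mem_Ico_zero_two hy).symm) measurableSet_Ico
  · exact (integrableOn_const (by simp [Real.volume_Ico])).congr_fun
      (fun y hy => (popSkel_of_mem_Ico_two_three hy).symm) measurableSet_Ico

theorem regenMean_popSkel (hu : IntegrableOn u (Ico 0 3)) :
    regenMean (PopSkel u) = ((∫ y in Ico (1 : ℝ) 2, u y) + regenMean u) / 2 := by
  have hPu := integrableOn_popSkel hu
  have h01 : ∫ y in Ico (0 : ℝ) 1, PopSkel u y = ∫ y in Ico (1 : ℝ) 2, u y := by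
    rw [setIntegral_popSkel_Ico le_rfl (by norm_num)]
    norm_num
  have h23 : ∫ y in Ico (2 : ℝ) 3, PopSkel u y = regenMean u := by
    rw [setIntegral_congr_fun measurableSet_Ico fun y hy => popSkel_of_mem_Ico_two_three hy,
      setIntegral_const, measureReal_def, Real.volume_Ico]
    norm_num
  rw [regenMean, setIntegral_union (Ico_disjoint_Ico.2 (by norm_num)) measurableSet_Ico
    (hPu.mono_set (Ico_subset_Ico le_rfl (by norm_num)))
    (hPu.mono_set (Ico_subset_Ico (by norm_num) le_rfl)), h01, h23]
  ring

theorem abs_regenMean_le (hu : IntegrableOn u (Ico 0 3)) :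
    |regenMean u| ≤
      ((∫ y in Ico (0 : ℝ) 1, |u y|) + ∫ y in Ico (2 : ℝ) 3, |u y|) / 2 := by
  have hu' : IntegrableOn (fun y => |u y|) (Ico 0 3) := hu.abs
  rw [regenMean, abs_mul, ← setIntegral_union (Ico_disjoint_Ico.2 (by norm_num))
    measurableSet_Ico (hu'.mono_set (Ico_subset_Ico le_rfl (by norm_num)))
    (hu'.mono_set (Ico_subset_Ico (by norm_num) le_rfl))]
  have := abs_integral_le_integral_abs
    (μ := volume.restrict (Ico (0 : ℝ) 1 ∪ Ico 2 3)) (f := u)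
  rw [abs_of_pos (by norm_num : (0 : ℝ) < 1 / 2)]
  linarith

theorem abs_regenMean_popSkel_le (hu : IntegrableOn u (Ico 0 3)) :
    |regenMean (PopSkel u)| ≤ (|∫ y in Ico (1 : ℝ) 2, u y| + |regenMean u|) / 2 := by
  rw [regenMean_popSkel hu, abs_div, abs_two]
  gcongr
  exact abs_add_le _ _

theorem abs_popSkel_three_le (hu : IntegrableOn u (Ico 0 3)) (x : ℝ) :
    |PopSkel (PopSkel (PopSkel u)) x|
      ≤ ((∫ y in Ico (0 : ℝ) 2, |u y|) + 2 * ∫ y in Ico (2 : ℝ) 3, |u y|) / 2 := by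
  have hu' : IntegrableOn (fun y => |u y|) (Ico 0 3) := hu.abs
  have hsplit := setIntegral_Ico_union_Ico zero_le_one one_le_two
    (hu'.mono_set (Ico_subset_Ico le_rfl (by norm_num)))
  have ha : 0 ≤ ∫ y in Ico (0 : ℝ) 1, |u y| :=
    setIntegral_nonneg measurableSet_Ico fun _ _ => abs_nonneg _
  have hb : 0 ≤ ∫ y in Ico (1 : ℝ) 2, |u y| :=
    setIntegral_nonneg measurableSet_Ico fun _ _ => abs_nonneg _
  have hc : 0 ≤ ∫ y in Ico (2 : ℝ) 3, |u y| :=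
    setIntegral_nonneg measurableSet_Ico fun _ _ => abs_nonneg _
  have h0 := abs_regenMean_le hu
  have h1 := abs_regenMean_popSkel_le hu
  have h2 := abs_regenMean_popSkel_le (integrableOn_popSkel hu)
  rw [setIntegral_popSkel_Ico zero_le_one le_rfl, one_add_one_eq_two, two_add_one_eq_three]
    at h2
  have hb' := abs_integral_le_integral_abs (μ := volume.restrict (Ico (1 : ℝ) 2)) (f := u)
  have hc' := abs_integral_le_integral_abs (μ := volume.restrict (Ico (2 : ℝ) 3)) (f := u)
  rw [hsplit]
  rcases lt_or_ge x 0 with hx0 | hx0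
  · rw [popSkel_of_notMem_Ico fun h => hx0.not_ge h.1, abs_zero]
    positivity
  rcases lt_or_ge x 1 with hx1 | hx1
  · rw [popSkel_of_mem_Ico_zero_two ⟨hx0, by linarith⟩,
      popSkel_of_mem_Ico_zero_two ⟨by linarith, by linarith⟩,
      popSkel_of_mem_Ico_two_three ⟨by linarith, by linarith⟩]
    linarith
  rcases lt_or_ge x 2 with hx2 | hx2
  · rw [popSkel_of_mem_Ico_zero_two ⟨hx0, hx2⟩,
      popSkel_of_mem_Ico_two_three ⟨by linarith, by linarith⟩]
    linarith
  rcases lt_or_ge x 3 with hx3 | hx3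
  · rw [popSkel_of_mem_Ico_two_three ⟨hx2, hx3⟩]
    linarith
  · rw [popSkel_of_notMem_Ico fun h => h.2.not_ge hx3, abs_zero]
    positivity

end Operator

theorem piSkel_eq :
    piSkel = (4⁻¹ : ℝ≥0∞) • volume.restrict (Ico 0 2)
      + (2⁻¹ : ℝ≥0∞) • volume.restrict (Ico 2 3) := by
  have hdens : (fun x : ℝ => ENNReal.ofReal (if x ∈ Ico (0 : ℝ) 2 then 1 / 4
      else if x ∈ Ico (2 : ℝ) 3 then 1 / 2 else 0)) =
      (Ico 0 2).indicator (fun _ => 4⁻¹) + (Ico 2 3).indicator (fun _ => 2⁻¹) := by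
    ext x
    simp only [Pi.add_apply, indicator_apply]
    split_ifs with h02 h23
    · exact absurd h23.1 (not_le.2 h02.2)
    all_goals simp [ENNReal.ofReal_inv_of_pos]
  rw [piSkel, hdens, withDensity_add_left (measurable_const.indicator measurableSet_Ico),
    withDensity_indicator measurableSet_Ico, withDensity_indicator measurableSet_Ico,
    withDensity_const, withDensity_const]

theorem integrable_piSkel_iff {f : ℝ → ℝ} :
    Integrable f piSkel ↔ IntegrableOn f (Ico 0 2) ∧ IntegrableOn f (Ico 2 3) := by
  rw [piSkel_eq, integrable_add_measure, integrable_smul_measure (by norm_num) (by norm_num),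
    integrable_smul_measure (by norm_num) (by norm_num)]
  rfl

theorem integral_piSkel {f : ℝ → ℝ} (hf : Integrable f piSkel) :
    ∫ x, f x ∂piSkel =
      (∫ x in Ico (0 : ℝ) 2, f x) / 4 + (∫ x in Ico (2 : ℝ) 3, f x) / 2 := by
  obtain ⟨h02, h23⟩ := integrable_piSkel_iff.1 hf
  rw [piSkel_eq, integral_add_measure (h02.smul_measure (by norm_num))
    (h23.smul_measure (by norm_num)), integral_smul_measure, integral_smul_measure]
  norm_num [div_eq_inv_mul]

/-- **Example (ultraboundedness of the 3-skeleton).** For the chain on `[0,3)` above,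
`‖P³f‖_∞ ≤ 3 ‖f‖_{L¹(π)}` for every `f ∈ L¹(π)`; i.e. the 3-step transition operator is
ultrabounded. -/
theorem stmt18 :
    ∀ f : ℝ → ℝ, Integrable f piSkel →
      eLpNorm (PopSkel (PopSkel (PopSkel f))) ⊤ piSkel
        ≤ ENNReal.ofReal (3 * ∫ x, |f x| ∂piSkel) := by
  intro f hf
  have hf03 : IntegrableOn f (Ico 0 3) := by
    rw [← Ico_union_Ico_eq_Ico zero_le_two (by norm_num : (2 : ℝ) ≤ 3), integrableOn_union]
    exact integrable_piSkel_iff.1 hf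
  have hL := integral_piSkel hf.abs
  have hL0 : 0 ≤ ∫ x, |f x| ∂piSkel := integral_nonneg fun _ => abs_nonneg _
  rw [eLpNorm_exponent_top]
  refine eLpNormEssSup_le_of_ae_bound (ae_of_all _ fun x => ?_)
  rw [Real.norm_eq_abs]
  linarith [abs_popSkel_three_le hf03 x]
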